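/- arXiv:2211.02214 — 4 statements merged into one kernel-verified Lean document; each statement's English description precedes it below -/
import Mathlib

section
/- Suppose f : ℝⁿ → ℝ is continuously differentiable with L-Lipschitz gradient and r : ℝⁿ → ℝ is convex. Fix x̄ ∈ ℝⁿ, ᾱ > 0, ε > 0, and suppose x̂ = x̄ + s satisfies: there exist w ∈ ℝⁿ with ‖w‖ ≤ √(2ᾱε) and g_ε := (1/ᾱ)(x̄ − ᾱ∇f(x̄) + w − x̂) ∈ ∂_ε r(x̂) (the ε-subdifferential). Then f(x̄+s) + r(x̄+s) ≤ f(x̄) + r(x̄) − (1/ᾱ − L/2)‖s‖² + √(2ε/ᾱ)‖s‖ + ε. -/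
/-!
Along the segment `t ↦ x + t • s` the Lipschitz bound on `∇f` makes
`f (x + t • s) - t ⟪∇f x, s⟫ - (L/2) t² ‖s‖²` nonincreasing, which gives the descent lemma
`f (x + s) ≤ f x + ⟪∇f x, s⟫ + (L/2) ‖s‖²`. Since `g = -∇f x + (w - s)/α`, the ε-subgradient
inequality for `r` tested at `z = x` reads
`r (x + s) ≤ r x - ⟪∇f x, s⟫ - ‖s‖²/α + ⟪w, s⟫/α + ε`. Adding the two, the gradient terms cancel,
and Cauchy–Schwarz with `‖w‖ ≤ √(2αε)` bounds `⟪w, s⟫/α` by `√(2ε/α) ‖s‖`.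
-/

section

variable {E : Type*} [NormedAddCommGroup E] [InnerProductSpace ℝ E]
  {f r : E → ℝ} {gradf : E → E} {L α ε : ℝ}

lemma hasDerivAt_comp_add_smul [CompleteSpace E] (hf : ∀ x, HasGradientAt f (gradf x) x)
    (x s : E) (t : ℝ) :
    HasDerivAt (fun t : ℝ => f (x + t • s)) (inner ℝ (gradf (x + t • s)) s) t := by
  have hline : HasDerivAt (fun t : ℝ => x + t • s) s t := by
    simpa using ((hasDerivAt_id t).smul_const s).const_add x
  exact ((hf (x + t • s)).hasFDerivAt.comp t hline).hasDerivAt.congr_deriv (by simp)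

lemma inner_gradient_sub_le (hlip : ∀ x y, ‖gradf x - gradf y‖ ≤ L * ‖x - y‖)
    (x s : E) {t : ℝ} (ht : 0 ≤ t) :
    inner ℝ (gradf (x + t • s) - gradf x) s ≤ L * t * ‖s‖ ^ 2 :=
  calc inner ℝ (gradf (x + t • s) - gradf x) s
      ≤ ‖gradf (x + t • s) - gradf x‖ * ‖s‖ := real_inner_le_norm _ _
    _ ≤ L * ‖t • s‖ * ‖s‖ := by
        gcongr
        simpa using hlip (x + t • s) x
    _ = L * t * ‖s‖ ^ 2 := by rw [norm_smul, Real.norm_of_nonneg ht]; ring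

theorem le_add_inner_gradient_add_sq [CompleteSpace E]
    (hf : ∀ x, HasGradientAt f (gradf x) x)
    (hlip : ∀ x y, ‖gradf x - gradf y‖ ≤ L * ‖x - y‖) (x s : E) :
    f (x + s) ≤ f x + inner ℝ (gradf x) s + L / 2 * ‖s‖ ^ 2 := by
  set φ : ℝ → ℝ := fun t => f (x + t • s) - t * inner ℝ (gradf x) s - L / 2 * t ^ 2 * ‖s‖ ^ 2
  have hφ : ∀ t, HasDerivAt φ
      (inner ℝ (gradf (x + t • s)) s - inner ℝ (gradf x) s - L * t * ‖s‖ ^ 2) t := by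
    intro t
    have hquad : HasDerivAt (fun t : ℝ => L / 2 * t ^ 2 * ‖s‖ ^ 2) (L * t * ‖s‖ ^ 2) t :=
      (((hasDerivAt_pow 2 t).const_mul (L / 2)).mul_const _).congr_deriv (by ring)
    exact ((hasDerivAt_comp_add_smul hf x s t).sub (hasDerivAt_mul_const _)).sub hquad
  have hanti : AntitoneOn φ (Set.Icc 0 1) := by
    refine antitoneOn_of_deriv_nonpos (convex_Icc 0 1)
      (fun t _ => (hφ t).continuousAt.continuousWithinAt)
      (fun t _ => (hφ t).differentiableAt.differentiableWithinAt) fun t ht => ?_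
    rw [interior_Icc] at ht
    have hgrad := inner_gradient_sub_le hlip x s ht.1.le
    rw [inner_sub_left] at hgrad
    rw [(hφ t).deriv]
    linarith
  have h10 : φ 1 ≤ φ 0 := hanti (by norm_num) (by norm_num) zero_le_one
  simp only [φ, one_smul, zero_smul, add_zero] at h10
  linarith

theorem add_le_of_inexact_prox_step [CompleteSpace E] (hα : α ≠ 0)
    (hf : ∀ x, HasGradientAt f (gradf x) x)
    (hlip : ∀ x y, ‖gradf x - gradf y‖ ≤ L * ‖x - y‖) {x s w g : E}
    (hg : g = (1 / α) • (x - α • gradf x + w - (x + s)))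
    (hsub : r x ≥ r (x + s) + inner ℝ g (x - (x + s)) - ε) :
    f (x + s) + r (x + s) ≤
      f x + r x - (1 / α - L / 2) * ‖s‖ ^ 2 + (1 / α) * inner ℝ w s + ε := by
  have hgs : g = -gradf x + (1 / α) • (w - s) := by
    rw [hg]
    match_scalars <;> field_simp
    ring
  have hinner : inner ℝ g (x - (x + s))
      = inner ℝ (gradf x) s - (1 / α) * inner ℝ w s + (1 / α) * ‖s‖ ^ 2 := by
    rw [hgs, show x - (x + s) = -s by abel]
    simp only [inner_neg_right, inner_add_left, inner_neg_left, real_inner_smul_left,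
      inner_sub_left, real_inner_self_eq_norm_sq]
    ring
  have hdesc := le_add_inner_gradient_add_sq hf hlip x s
  linarith

end

lemma Real.sqrt_mul_div_self {a : ℝ} (ha : 0 < a) (c : ℝ) :
    Real.sqrt (a * c) / a = Real.sqrt (c / a) := by
  rw [show c / a = a * c / a ^ 2 by field_simp, Real.sqrt_div' _ (by positivity),
    Real.sqrt_sq ha.le]

theorem stmt2_general {n : ℕ} (L αb ε : ℝ) (hαb : 0 < αb)
    (f r : EuclideanSpace ℝ (Fin n) → ℝ)
    (gradf : EuclideanSpace ℝ (Fin n) → EuclideanSpace ℝ (Fin n))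
    (hf : ∀ x, HasGradientAt f (gradf x) x)
    (hlip : ∀ x y, ‖gradf x - gradf y‖ ≤ L * ‖x - y‖)
    (xbar s w : EuclideanSpace ℝ (Fin n))
    (hw : ‖w‖ ≤ Real.sqrt (2 * αb * ε))
    (geps : EuclideanSpace ℝ (Fin n))
    (hgeps : geps = (1 / αb) • (xbar - αb • gradf xbar + w - (xbar + s)))
    (hsubdiff : ∀ z, r z ≥ r (xbar + s) + (inner ℝ geps (z - (xbar + s)) : ℝ) - ε) :
    f (xbar + s) + r (xbar + s) ≤
      f xbar + r xbar - (1 / αb - L / 2) * ‖s‖ ^ 2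
        + Real.sqrt (2 * ε / αb) * ‖s‖ + ε := by
  have hstep := add_le_of_inexact_prox_step hαb.ne' hf hlip hgeps (hsubdiff xbar)
  have herror : (1 / αb) * inner ℝ w s ≤ Real.sqrt (2 * ε / αb) * ‖s‖ :=
    calc (1 / αb) * inner ℝ w s ≤ (1 / αb) * (Real.sqrt (αb * (2 * ε)) * ‖s‖) := by
          gcongr
          rw [show αb * (2 * ε) = 2 * αb * ε by ring]
          exact (real_inner_le_norm w s).trans (by gcongr)
      _ = Real.sqrt (2 * ε / αb) * ‖s‖ := by
          rw [← Real.sqrt_mul_div_self hαb]; ring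
  linarith

/-- descent property of an inexact proximal-gradient step. -/
theorem stmt2 {n : ℕ} (L αb ε : ℝ) (hL : 0 < L) (hαb : 0 < αb) (hε : 0 < ε)
    (f r : EuclideanSpace ℝ (Fin n) → ℝ)
    (gradf : EuclideanSpace ℝ (Fin n) → EuclideanSpace ℝ (Fin n))
    (hf : ∀ x, HasGradientAt f (gradf x) x)
    (hlip : ∀ x y, ‖gradf x - gradf y‖ ≤ L * ‖x - y‖)
    (hr : ConvexOn ℝ Set.univ r)
    (xbar s w : EuclideanSpace ℝ (Fin n))
    (hw : ‖w‖ ≤ Real.sqrt (2 * αb * ε))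
    (geps : EuclideanSpace ℝ (Fin n))
    (hgeps : geps = (1 / αb) • (xbar - αb • gradf xbar + w - (xbar + s)))
    (hsubdiff : ∀ z, r z ≥ r (xbar + s) + (inner ℝ geps (z - (xbar + s)) : ℝ) - ε) :
    f (xbar + s) + r (xbar + s) ≤
      f xbar + r xbar - (1 / αb - L / 2) * ‖s‖ ^ 2
        + Real.sqrt (2 * ε / αb) * ‖s‖ + ε :=
  stmt2_general L αb ε hαb f r gradf hf hlip xbar s w hw geps hgeps hsubdiff
end

section
/- Suppose f : ℝⁿ → ℝ is differentiable and r : ℝⁿ → ℝ is convex. Fix x̄ ∈ ℝⁿ, ᾱ > 0, ε > 0, and suppose x̂ = x̄ + s satisfies: there exist w ∈ ℝⁿ with ‖w‖ ≤ √(2ᾱε) and g_ε := (1/ᾱ)(x̄ − ᾱ∇f(x̄) + w − x̂) ∈ ∂_ε r(x̂). Then for every subgradient g_r ∈ ∂r(x̄), it holds that sᵀ(∇f(x̄) + g_r) ≤ −(1/ᾱ)‖s‖² + √(2ε/ᾱ)‖s‖ + ε. -/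
/-! Adding the subgradient inequality of `gr` at `x̄` (tested at `x̂`) to the `ε`-subgradient
inequality of `g_ε` at `x̂` (tested at `x̄`) gives the monotonicity estimate
`⟪g_r, s⟫ ≤ ⟪g_ε, s⟫ + ε`. Expanding `g_ε` turns `⟪g_ε, s⟫` into
`-⟪∇f(x̄), s⟫ + (⟪w, s⟫ - ‖s‖²) / ᾱ`, and Cauchy–Schwarz bounds `⟪w, s⟫ / ᾱ`
by `√(2ε/ᾱ) ‖s‖`. -/

section Subgradient

variable {E : Type*} [NormedAddCommGroup E] [InnerProductSpace ℝ E]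

theorem inner_subgradient_le_inner_epsSubgradient_add {r : E → ℝ} {x s g gε : E} {ε : ℝ}
    (hg : ∀ z, r z ≥ r x + inner ℝ g (z - x))
    (hgε : ∀ z, r z ≥ r (x + s) + inner ℝ gε (z - (x + s)) - ε) :
    inner ℝ g s ≤ inner ℝ gε s + ε := by
  have hx := hgε x
  have hxs := hg (x + s)
  rw [show x - (x + s) = -s by abel, inner_neg_right] at hx
  rw [add_sub_cancel_left] at hxs
  linarith

theorem inner_proxGradStep_eq {α : ℝ} (hα : α ≠ 0) (x d w s : E) :
    inner ℝ ((1 / α) • (x - α • d + w - (x + s))) s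
      = -inner ℝ d s + (1 / α) * inner ℝ w s - (1 / α) * ‖s‖ ^ 2 := by
  rw [show x - α • d + w - (x + s) = -(α • d) + w - s by abel, real_inner_smul_left,
    inner_sub_left, inner_add_left, inner_neg_left, real_inner_smul_left,
    real_inner_self_eq_norm_sq]
  field_simp

end Subgradient

theorem one_div_mul_sqrt_two_mul_mul {α ε : ℝ} (hα : 0 < α) :
    1 / α * √(2 * α * ε) = √(2 * ε / α) := by
  rw [show 2 * ε / α = 2 * α * ε / α ^ 2 by field_simp, Real.sqrt_div' _ (by positivity),
    Real.sqrt_sq hα.le, one_div_mul_eq_div]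

theorem stmt3_general {n : ℕ} (αb ε : ℝ) (hαb : 0 < αb)
    (r : EuclideanSpace ℝ (Fin n) → ℝ)
    (gradf : EuclideanSpace ℝ (Fin n) → EuclideanSpace ℝ (Fin n))
    (xbar s w : EuclideanSpace ℝ (Fin n))
    (hw : ‖w‖ ≤ Real.sqrt (2 * αb * ε))
    (geps : EuclideanSpace ℝ (Fin n))
    (hgeps : geps = (1 / αb) • (xbar - αb • gradf xbar + w - (xbar + s)))
    (hsubdiff : ∀ z, r z ≥ r (xbar + s) + (inner ℝ geps (z - (xbar + s)) : ℝ) - ε)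
    (gr : EuclideanSpace ℝ (Fin n))
    (hgr : ∀ z, r z ≥ r xbar + (inner ℝ gr (z - xbar) : ℝ)) :
    (inner ℝ s (gradf xbar + gr) : ℝ) ≤
      -(1 / αb) * ‖s‖ ^ 2 + Real.sqrt (2 * ε / αb) * ‖s‖ + ε := by
  have hmono := inner_subgradient_le_inner_epsSubgradient_add hgr hsubdiff
  have hgeps_s : inner ℝ geps s
      = -inner ℝ (gradf xbar) s + (1 / αb) * inner ℝ w s - (1 / αb) * ‖s‖ ^ 2 := by
    rw [hgeps, inner_proxGradStep_eq hαb.ne']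
  have hws : (1 / αb) * inner ℝ w s ≤ Real.sqrt (2 * ε / αb) * ‖s‖ := by
    rw [← one_div_mul_sqrt_two_mul_mul hαb, mul_assoc]
    gcongr
    exact (real_inner_le_norm w s).trans (by gcongr)
  rw [real_inner_comm, inner_add_left]
  linarith

/-- bound on the inner product of the step with `∇f(x̄) + g_r`. -/
theorem stmt3 {n : ℕ} (αb ε : ℝ) (hαb : 0 < αb) (hε : 0 < ε)
    (f r : EuclideanSpace ℝ (Fin n) → ℝ)
    (gradf : EuclideanSpace ℝ (Fin n) → EuclideanSpace ℝ (Fin n))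
    (hf : ∀ x, HasGradientAt f (gradf x) x)
    (hr : ConvexOn ℝ Set.univ r)
    (xbar s w : EuclideanSpace ℝ (Fin n))
    (hw : ‖w‖ ≤ Real.sqrt (2 * αb * ε))
    (geps : EuclideanSpace ℝ (Fin n))
    (hgeps : geps = (1 / αb) • (xbar - αb • gradf xbar + w - (xbar + s)))
    (hsubdiff : ∀ z, r z ≥ r (xbar + s) + (inner ℝ geps (z - (xbar + s)) : ℝ) - ε)
    (gr : EuclideanSpace ℝ (Fin n))
    (hgr : ∀ z, r z ≥ r xbar + (inner ℝ gr (z - xbar) : ℝ)) :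
    (inner ℝ s (gradf xbar + gr) : ℝ) ≤
      -(1 / αb) * ‖s‖ ^ 2 + Real.sqrt (2 * ε / αb) * ‖s‖ + ε :=
  stmt3_general αb ε hαb r gradf xbar s w hw geps hgeps hsubdiff gr hgr
end

section
/- Let α > 0, γ₁ ∈ (0,2), and s ∈ ℝⁿ with s ≠ 0. If 0 < ε ≤ (1/4)·(√(6/((1+γ₁)α)) − √(2/α))²·‖s‖², then (γ₁/(2α))·(2αε + 2√(2αε)‖s‖ + ‖s‖²) ≤ (1/α)‖s‖² − √(2ε/α)‖s‖ − ε. -/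
/-- algebraic inequality underlying the option-1 adaptive criterion. -/
theorem stmt4 {n : ℕ} (α γ₁ ε : ℝ) (hα : 0 < α) (hγ₁ : 0 < γ₁ ∧ γ₁ < 2)
    (s : EuclideanSpace ℝ (Fin n)) (hs : s ≠ 0)
    (hεpos : 0 < ε)
    (hεub : ε ≤ (1 / 4) * (Real.sqrt (6 / ((1 + γ₁) * α)) - Real.sqrt (2 / α)) ^ 2 * ‖s‖ ^ 2) :
    (γ₁ / (2 * α)) * (2 * α * ε + 2 * Real.sqrt (2 * α * ε) * ‖s‖ + ‖s‖ ^ 2)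
      ≤ (1 / α) * ‖s‖ ^ 2 - Real.sqrt (2 * ε / α) * ‖s‖ - ε := by
  obtain ⟨hγ0, hγ2⟩ := hγ₁
  have hN : 0 < ‖s‖ := norm_pos_iff.mpr hs
  set N := ‖s‖ with hNdef
  set u := Real.sqrt (2 * α * ε) with hudef
  set v := Real.sqrt (2 * ε / α) with hvdef
  set A := Real.sqrt (6 / ((1 + γ₁) * α)) with hAdef
  set B := Real.sqrt (2 / α) with hBdef
  set w := Real.sqrt (3 / (1 + γ₁)) with hwdef
  have h1γ : (0:ℝ) < 1 + γ₁ := by linarith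
  have hu0 : 0 ≤ u := Real.sqrt_nonneg _
  have hv0 : 0 ≤ v := Real.sqrt_nonneg _
  have hw0 : 0 ≤ w := Real.sqrt_nonneg _
  have hu2 : u ^ 2 = 2 * α * ε := Real.sq_sqrt (by positivity)
  have hv2 : v ^ 2 = 2 * ε / α := Real.sq_sqrt (by positivity)
  have hw2 : w ^ 2 = 3 / (1 + γ₁) := Real.sq_sqrt (by positivity)
  have huv : u = α * v := by
    have h : (α * v) ^ 2 = u ^ 2 := by
      rw [hu2, mul_pow, hv2]; field_simp
    have h2 : (u - α * v) * (u + α * v) = 0 := by nlinarith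
    rcases mul_eq_zero.mp h2 with h3 | h3
    · linarith
    · have : 0 ≤ α * v := mul_nonneg hα.le hv0
      linarith
  have hAB : B ≤ A := by
    apply Real.sqrt_le_sqrt
    rw [div_le_div_iff₀ hα (by positivity)]
    nlinarith
  have hsε : Real.sqrt ε ≤ (1 / 2) * (A - B) * N := by
    have h1 : Real.sqrt ε ≤ Real.sqrt ((1 / 4) * (A - B) ^ 2 * N ^ 2) :=
      Real.sqrt_le_sqrt hεub
    rwa [show (1 / 4) * (A - B) ^ 2 * N ^ 2 = ((1 / 2) * (A - B) * N) ^ 2 by ring,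
      Real.sqrt_sq (by nlinarith)] at h1
  have hA2 : Real.sqrt (2 * α) * A = 2 * w := by
    rw [hAdef, hwdef, ← Real.sqrt_mul (by positivity),
      show 2 * α * (6 / ((1 + γ₁) * α)) = 4 * (3 / (1 + γ₁)) by field_simp; ring,
      Real.sqrt_mul (by norm_num), show (4:ℝ) = 2 ^ 2 by norm_num,
      Real.sqrt_sq (by norm_num)]
  have hB2 : Real.sqrt (2 * α) * B = 2 := by
    rw [hBdef, ← Real.sqrt_mul (by positivity),
      show 2 * α * (2 / α) = 4 by field_simp; ring,
      show (4:ℝ) = 2 ^ 2 by norm_num, Real.sqrt_sq (by norm_num)]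
  have hkey : u ≤ (w - 1) * N := by
    have h1 : u = Real.sqrt (2 * α) * Real.sqrt ε := by
      rw [hudef, Real.sqrt_mul (by positivity)]
    have h2 : Real.sqrt (2 * α) * Real.sqrt ε ≤
        Real.sqrt (2 * α) * ((1 / 2) * (A - B) * N) :=
      mul_le_mul_of_nonneg_left hsε (Real.sqrt_nonneg _)
    have h3 : Real.sqrt (2 * α) * ((1 / 2) * (A - B) * N) = (w - 1) * N := by
      have : Real.sqrt (2 * α) * (A - B) = 2 * w - 2 := by
        rw [mul_sub, hA2, hB2]
      linear_combination (N / 2) * this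
    rw [h1]
    linarith [h2, h3]
  have hsq : (u + N) ^ 2 ≤ (w * N) ^ 2 := by
    have h0 : 0 ≤ u + N := by linarith
    have h1 : u + N ≤ w * N := by
      have : (w - 1) * N = w * N - N := by ring
      linarith [hkey]
    exact pow_le_pow_left₀ h0 h1 2
  have key : (1 + γ₁) * (u + N) ^ 2 ≤ 3 * N ^ 2 := by
    have heq : (1 + γ₁) * (w * N) ^ 2 = 3 * N ^ 2 := by
      rw [mul_pow, ← mul_assoc, mul_comm (1 + γ₁) (w ^ 2), hw2]
      field_simp
    calc (1 + γ₁) * (u + N) ^ 2 ≤ (1 + γ₁) * (w * N) ^ 2 :=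
          mul_le_mul_of_nonneg_left hsq h1γ.le
      _ = 3 * N ^ 2 := heq
  have hεu : ε = u ^ 2 / (2 * α) := by
    rw [hu2]; field_simp
  have hvu : v = u / α := by
    rw [huv]; field_simp
  have hmain : γ₁ * (u ^ 2 + 2 * u * N + N ^ 2) ≤ 2 * N ^ 2 - 2 * u * N - u ^ 2 := by
    have expand : (1 + γ₁) * (u + N) ^ 2
        = γ₁ * (u ^ 2 + 2 * u * N + N ^ 2) + (u ^ 2 + 2 * u * N + N ^ 2) := by ring
    linarith [key, expand]
  have hfin : (γ₁ / (2 * α)) * (2 * α * (u ^ 2 / (2 * α)) + 2 * u * N + N ^ 2)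
      ≤ (1 / α) * N ^ 2 - (u / α) * N - u ^ 2 / (2 * α) := by
    rw [div_mul_eq_mul_div, div_le_iff₀ (by positivity : (0:ℝ) < 2 * α)]
    have e1 : γ₁ * (2 * α * (u ^ 2 / (2 * α)) + 2 * u * N + N ^ 2)
        = γ₁ * (u ^ 2 + 2 * u * N + N ^ 2) := by field_simp
    have e2 : ((1 / α) * N ^ 2 - (u / α) * N - u ^ 2 / (2 * α)) * (2 * α)
        = 2 * N ^ 2 - 2 * u * N - u ^ 2 := by field_simp
    rw [e1, e2]
    exact hmain
  rw [hεu, hvu]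
  exact hfin
end

section
/- In the setting of the dual of the overlapping group ℓ₁ proximal subproblem: if ŷ* is a dual maximizer of φ_d(ŷ) = −(α/2)‖Aŷ‖² − uᵀAŷ over the feasible set F_d = {ŷ : ‖ŷ_{M(i)}‖ ≤ λ_i for all i}, and for some group index i the constraint is strictly inactive, ‖ŷ*_{M(i)}‖ < λ_i, then the primal solution x* = u + αAŷ* satisfies x*_{g_i} = 0. -/
/-! At an interior dual maximizer, moving the `i`-th block along any coordinate direction `e_j`
with `j ∈ g i` stays feasible for small steps, so `t ↦ φ_d(ŷ* + t e_j)` has a local maximum at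
`t = 0`. Its derivative there is `-⟪u + α ∑ ŷ*, e_j⟫ = -x*_j`, which must therefore vanish. -/

/-- Dual feasibility for the overlapping group ℓ₁ dual: each block `y i` is
supported on the group `g i` and has norm at most `lam i`. -/
def GroupDualFeasible {n G : ℕ} (g : Fin G → Finset (Fin n)) (lam : Fin G → ℝ)
    (y : Fin G → EuclideanSpace ℝ (Fin n)) : Prop :=
  ∀ i, (∀ j, j ∉ g i → y i j = 0) ∧ ‖y i‖ ≤ lam i

open Filter Topology

lemma eq_zero_of_isLocalMin_mul_add_mul_sq {a b : ℝ}
    (h : IsLocalMin (fun t : ℝ => a * t + b * t ^ 2) 0) : a = 0 :=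
  h.hasDerivAt_eq_zero <| by
    simpa using ((hasDerivAt_id' (0 : ℝ)).const_mul a).fun_add
      ((hasDerivAt_pow 2 (0 : ℝ)).const_mul b)

lemma neg_half_norm_sq_sub_inner_add_smul {E : Type*} [NormedAddCommGroup E]
    [InnerProductSpace ℝ E] (α : ℝ) (u s e : E) (t : ℝ) :
    -(α / 2) * ‖s + t • e‖ ^ 2 - inner ℝ u (s + t • e) =
      -(α / 2) * ‖s‖ ^ 2 - inner ℝ u s
        - (inner ℝ (u + α • s) e * t + (α / 2 * ‖e‖ ^ 2) * t ^ 2) := by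
  rw [norm_add_sq_real, norm_smul, inner_add_right, real_inner_smul_right,
    real_inner_smul_right, inner_add_left, real_inner_smul_left, Real.norm_eq_abs]
  ring_nf
  rw [sq_abs]

lemma sum_add_pi_single {ι M : Type*} [Fintype ι] [DecidableEq ι] [AddCommMonoid M]
    (y : ι → M) (i : ι) (v : M) : ∑ k, (y + Pi.single i v : ι → M) k = ∑ k, y k + v := by
  simp only [Pi.add_apply, Finset.sum_add_distrib, Fintype.sum_pi_single']

lemma GroupDualFeasible.add_pi_single {n G : ℕ} {g : Fin G → Finset (Fin n)}
    {lam : Fin G → ℝ} {y : Fin G → EuclideanSpace ℝ (Fin n)}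
    (hy : GroupDualFeasible g lam y) {i : Fin G} {v : EuclideanSpace ℝ (Fin n)}
    (hv : ∀ j, j ∉ g i → v j = 0) (hnorm : ‖y i + v‖ ≤ lam i) :
    GroupDualFeasible g lam (y + Pi.single i v) := by
  intro k
  rcases eq_or_ne k i with rfl | hk
  · refine ⟨fun j hj => ?_, by simpa using hnorm⟩
    simp [(hy k).1 j hj, hv j hj]
  · simpa [Pi.single_eq_of_ne hk] using hy k

theorem stmt18_general {n G : ℕ} (α : ℝ)
    (g : Fin G → Finset (Fin n)) (lam : Fin G → ℝ)
    (u : EuclideanSpace ℝ (Fin n))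
    (φd : (Fin G → EuclideanSpace ℝ (Fin n)) → ℝ)
    (hφd : ∀ y, φd y = -(α / 2) * ‖∑ i, y i‖ ^ 2 - (inner ℝ u (∑ i, y i) : ℝ))
    (ystar : Fin G → EuclideanSpace ℝ (Fin n))
    (hfeas : GroupDualFeasible g lam ystar)
    (hmax : ∀ y, GroupDualFeasible g lam y → φd y ≤ φd ystar)
    (i : Fin G) (hstrict : ‖ystar i‖ < lam i) :
    ∀ j ∈ g i, (u + α • ∑ i', ystar i') j = 0 := by
  intro j hj
  set e := EuclideanSpace.single j (1 : ℝ)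
  have he : ∀ j', j' ∉ g i → e j' = 0 := fun j' hj' => by
    simp [e, show j' ≠ j from fun h => hj' (h ▸ hj)]
  have hnear : ∀ᶠ t : ℝ in 𝓝 0, ‖ystar i + t • e‖ < lam i :=
    ContinuousAt.eventually_lt (by fun_prop) continuousAt_const (by simpa using hstrict)
  have hmin : IsLocalMin (fun t : ℝ => inner ℝ (u + α • ∑ i', ystar i') e * t
      + (α / 2 * ‖e‖ ^ 2) * t ^ 2) 0 := by
    filter_upwards [hnear] with t ht
    have hle := hmax _ (hfeas.add_pi_single (fun j' hj' => by simp [he j' hj']) ht.le)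
    rw [hφd, hφd, sum_add_pi_single, neg_half_norm_sq_sub_inner_add_smul] at hle
    simpa using hle
  simpa [e, EuclideanSpace.inner_single_right] using eq_zero_of_isLocalMin_mul_add_mul_sq hmin

/-- if the `i`-th dual constraint is strictly inactive at a dual
maximizer, then the corresponding primal block `x*_{g_i}` vanishes, where
`x* = u + αAŷ*`. -/
theorem stmt18 {n G : ℕ} (α : ℝ) (hα : 0 < α)
    (g : Fin G → Finset (Fin n)) (lam : Fin G → ℝ) (hlam : ∀ i, 0 < lam i)
    (hcover : ∀ j : Fin n, ∃ i, j ∈ g i)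
    (u : EuclideanSpace ℝ (Fin n))
    (φd : (Fin G → EuclideanSpace ℝ (Fin n)) → ℝ)
    (hφd : ∀ y, φd y = -(α / 2) * ‖∑ i, y i‖ ^ 2 - (inner ℝ u (∑ i, y i) : ℝ))
    (ystar : Fin G → EuclideanSpace ℝ (Fin n))
    (hfeas : GroupDualFeasible g lam ystar)
    (hmax : ∀ y, GroupDualFeasible g lam y → φd y ≤ φd ystar)
    (i : Fin G) (hstrict : ‖ystar i‖ < lam i) :
    ∀ j ∈ g i, (u + α • ∑ i', ystar i') j = 0 :=
  stmt18_general α g lam u φd hφd ystar hfeas hmax i hstrict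
end
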